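/- arXiv:1703.10797 — 5 statements merged into one kernel-verified Lean document; each statement's English description precedes it below -/
import Mathlib

section
/- Let F, G : [0,∞) → [0,∞) be nondecreasing continuous functions such that F(s)G(s) → +∞ as s → +∞. Let (λ_j)_{j∈ℕ} be a sequence of nonnegative real numbers and (a_j)_{j∈ℕ} a sequence of real numbers with 0 < Σ_j a_j² < ∞ and Σ_j F(λ_j)² G(λ_j)² a_j² < ∞. Then the sums Σ_j F(λ_j)² a_j² and Σ_j G(λ_j)² a_j² are finite and ( Σ_j F(λ_j)² a_j² )^{1/2} · ( Σ_j G(λ_j)² a_j² )^{1/2} ≤ 2 ( Σ_j F(λ_j)² G(λ_j)² a_j² )^{1/2} · ( Σ_j a_j² )^{1/2}. -/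
/-!
With `f = F²` and `g = G²`, monotonicity gives `f(s) g(t) ≤ f(s) g(s) + f(t) g(t)` for all
`s, t ≥ 0`: if `s ≤ t` then `f(s) ≤ f(t)`, otherwise `g(t) ≤ g(s)`. Taking `s = λ_j`, `t = λ_k`,
multiplying by `a_j² a_k²` and summing over `j, k` gives
`(Σ f(λ_j) a_j²)(Σ g(λ_j) a_j²) ≤ 2 (Σ f(λ_j) g(λ_j) a_j²)(Σ a_j²)`.
Taking instead `t = s₀` with `F(s₀) G(s₀) > 0`, which exists since `F G → ∞`, bounds
`f(λ_j) a_j²` by `f(s₀) a_j² + f(λ_j) g(λ_j) a_j² / g(s₀)`, whence summability.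
-/

lemma MonotoneOn.pow_of_nonneg {α : Type*} [Preorder α] {S : Set α} {f : α → ℝ}
    (hf : MonotoneOn f S) (hf₀ : ∀ s ∈ S, 0 ≤ f s) (n : ℕ) :
    MonotoneOn (fun s => f s ^ n) S :=
  fun s hs _ ht hst => pow_le_pow_left₀ (hf₀ s hs) (hf hs ht hst) n

section MonotonePair

variable {α : Type*} [LinearOrder α] {S : Set α} {f g : α → ℝ}

lemma MonotoneOn.mul_le_add_mul (hf : MonotoneOn f S) (hg : MonotoneOn g S)
    (hf₀ : ∀ s ∈ S, 0 ≤ f s) (hg₀ : ∀ s ∈ S, 0 ≤ g s) {s t : α} (hs : s ∈ S) (ht : t ∈ S) :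
    f s * g t ≤ f s * g s + f t * g t := by
  have hfgs : 0 ≤ f s * g s := mul_nonneg (hf₀ s hs) (hg₀ s hs)
  have hfgt : 0 ≤ f t * g t := mul_nonneg (hf₀ t ht) (hg₀ t ht)
  rcases le_total s t with hst | hts
  · have : f s * g t ≤ f t * g t := mul_le_mul_of_nonneg_right (hf hs ht hst) (hg₀ t ht)
    linarith
  · have : f s * g t ≤ f s * g s := mul_le_mul_of_nonneg_left (hg ht hs hts) (hf₀ s hs)
    linarith

lemma MonotoneOn.summable_mul {ι : Type*} {lam : ι → α} {w : ι → ℝ}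
    (hf : MonotoneOn f S) (hg : MonotoneOn g S) (hf₀ : ∀ s ∈ S, 0 ≤ f s)
    (hg₀ : ∀ s ∈ S, 0 ≤ g s) {s₀ : α} (hs₀ : s₀ ∈ S) (hgs₀ : 0 < g s₀) (hlam : ∀ j, lam j ∈ S)
    (hw₀ : ∀ j, 0 ≤ w j) (hw : Summable w)
    (hfgw : Summable fun j => f (lam j) * g (lam j) * w j) :
    Summable fun j => f (lam j) * w j := by
  have hbound : ∀ j, f (lam j) * w j ≤ f s₀ * w j + (f (lam j) * g (lam j) * w j) / g s₀ := by
    intro j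
    have hpt := mul_le_mul_of_nonneg_right
      (hf.mul_le_add_mul hg hf₀ hg₀ (hlam j) hs₀) (hw₀ j)
    rw [add_comm, div_add' _ _ _ hgs₀.ne', le_div_iff₀ hgs₀]
    linarith
  refine Summable.of_nonneg_of_le (fun j => mul_nonneg (hf₀ _ (hlam j)) (hw₀ j)) hbound ?_
  exact (hw.mul_left _).add (hfgw.div_const _)

end MonotonePair

lemma tsum_mul_tsum_le_two_mul_tsum_mul_tsum {ι : Type*} {x y w : ι → ℝ}
    (hxy : ∀ j k, x j * y k ≤ x j * y j + x k * y k) (hw₀ : ∀ j, 0 ≤ w j) (hw : Summable w)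
    (hxw : Summable fun j => x j * w j) (hyw : Summable fun j => y j * w j)
    (hxyw : Summable fun j => x j * y j * w j) :
    (∑' j, x j * w j) * (∑' j, y j * w j) ≤ 2 * (∑' j, x j * y j * w j) * ∑' j, w j := by
  set Y := ∑' j, y j * w j
  set Z := ∑' j, x j * y j * w j
  set N := ∑' j, w j
  have hrow : ∀ j, x j * w j * Y ≤ x j * y j * w j * N + w j * Z := by
    intro j
    have hpt : ∀ k, x j * w j * (y k * w k) ≤ x j * y j * w j * w k + w j * (x k * y k * w k) :=
      fun k => by linarith [mul_le_mul_of_nonneg_right (hxy j k) (mul_nonneg (hw₀ j) (hw₀ k))]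
    calc x j * w j * Y = ∑' k, x j * w j * (y k * w k) := tsum_mul_left.symm
      _ ≤ ∑' k, (x j * y j * w j * w k + w j * (x k * y k * w k)) :=
          (hyw.mul_left _).tsum_le_tsum hpt ((hw.mul_left _).add (hxyw.mul_left _))
      _ = x j * y j * w j * N + w j * Z := by
          rw [(hw.mul_left _).tsum_add (hxyw.mul_left _), tsum_mul_left, tsum_mul_left]
  calc (∑' j, x j * w j) * Y = ∑' j, x j * w j * Y := tsum_mul_right.symm
    _ ≤ ∑' j, (x j * y j * w j * N + w j * Z) :=
        (hxw.mul_right _).tsum_le_tsum hrow ((hxyw.mul_right _).add (hw.mul_right _))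
    _ = 2 * Z * N := by
        rw [(hxyw.mul_right _).tsum_add (hw.mul_right _), tsum_mul_right, tsum_mul_right]
        ring

lemma Real.sqrt_mul_sqrt_le_mul_sqrt_mul_sqrt {X Y Z N c : ℝ} (hX : 0 ≤ X) (hZ : 0 ≤ Z)
    (hc : 0 ≤ c) (h : X * Y ≤ c ^ 2 * (Z * N)) : √X * √Y ≤ c * √Z * √N := by
  calc √X * √Y = √(X * Y) := (Real.sqrt_mul hX Y).symm
    _ ≤ √(c ^ 2 * (Z * N)) := Real.sqrt_le_sqrt h
    _ = c * √Z * √N := by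
        rw [Real.sqrt_mul (sq_nonneg c), Real.sqrt_sq hc, Real.sqrt_mul hZ, mul_assoc]

theorem statement2_general (F G : ℝ → ℝ) (lam a : ℕ → ℝ)
    (hFnonneg : ∀ s, 0 ≤ s → 0 ≤ F s)
    (hGnonneg : ∀ s, 0 ≤ s → 0 ≤ G s)
    (hFmono : MonotoneOn F (Set.Ici (0 : ℝ)))
    (hGmono : MonotoneOn G (Set.Ici (0 : ℝ)))
    (hFGtop : Filter.Tendsto (fun s => F s * G s) Filter.atTop Filter.atTop)
    (hlam : ∀ j, 0 ≤ lam j)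
    (ha : Summable (fun j => (a j) ^ 2))
    (hFG : Summable (fun j => (F (lam j)) ^ 2 * (G (lam j)) ^ 2 * (a j) ^ 2)) :
    Summable (fun j => (F (lam j)) ^ 2 * (a j) ^ 2) ∧
    Summable (fun j => (G (lam j)) ^ 2 * (a j) ^ 2) ∧
    Real.sqrt (∑' j, (F (lam j)) ^ 2 * (a j) ^ 2) *
        Real.sqrt (∑' j, (G (lam j)) ^ 2 * (a j) ^ 2)
      ≤ 2 * Real.sqrt (∑' j, (F (lam j)) ^ 2 * (G (lam j)) ^ 2 * (a j) ^ 2) *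
          Real.sqrt (∑' j, (a j) ^ 2) := by
  obtain ⟨s₀, hFGs₀, hs₀⟩ : ∃ s, 0 < F s * G s ∧ 0 ≤ s :=
    ((hFGtop.eventually_gt_atTop 0).and (Filter.eventually_ge_atTop 0)).exists
  have hF2 := hFmono.pow_of_nonneg hFnonneg 2
  have hG2 := hGmono.pow_of_nonneg hGnonneg 2
  have hsq₀ : ∀ (H : ℝ → ℝ) s, s ∈ Set.Ici (0 : ℝ) → 0 ≤ H s ^ 2 := fun H s _ => sq_nonneg (H s)
  have ha₀ : ∀ j, 0 ≤ a j ^ 2 := fun j => sq_nonneg (a j)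
  have hX := hF2.summable_mul hG2 (hsq₀ F) (hsq₀ G) hs₀
    (sq_pos_iff.2 (right_ne_zero_of_mul hFGs₀.ne')) hlam ha₀ ha hFG
  have hY := hG2.summable_mul hF2 (hsq₀ G) (hsq₀ F) hs₀
    (sq_pos_iff.2 (left_ne_zero_of_mul hFGs₀.ne')) hlam ha₀ ha
    (by simpa only [mul_comm (G _ ^ 2)] using hFG)
  have hXY := tsum_mul_tsum_le_two_mul_tsum_mul_tsum
    (fun j k => hF2.mul_le_add_mul hG2 (hsq₀ F) (hsq₀ G) (hlam j) (hlam k)) ha₀ ha hX hY hFG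
  have hZN : 0 ≤ (∑' j, F (lam j) ^ 2 * G (lam j) ^ 2 * a j ^ 2) * ∑' j, a j ^ 2 :=
    mul_nonneg (tsum_nonneg fun j => by positivity) (tsum_nonneg ha₀)
  refine ⟨hX, hY, Real.sqrt_mul_sqrt_le_mul_sqrt_mul_sqrt (tsum_nonneg fun j => by positivity)
    (tsum_nonneg fun j => by positivity) zero_le_two ?_⟩
  linarith

/-- Spectral-coefficient form of `‖F(L)u‖ ‖G(L)u‖ ≤ 2 ‖F(L)G(L)u‖ ‖u‖` for
nondecreasing continuous `F, G : [0,∞) → [0,∞)` with `F·G → +∞` at infinity. -/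
theorem statement2 (F G : ℝ → ℝ) (lam a : ℕ → ℝ)
    (hFnonneg : ∀ s, 0 ≤ s → 0 ≤ F s)
    (hGnonneg : ∀ s, 0 ≤ s → 0 ≤ G s)
    (hFmono : MonotoneOn F (Set.Ici (0 : ℝ)))
    (hGmono : MonotoneOn G (Set.Ici (0 : ℝ)))
    (hFcont : ContinuousOn F (Set.Ici (0 : ℝ)))
    (hGcont : ContinuousOn G (Set.Ici (0 : ℝ)))
    (hFGtop : Filter.Tendsto (fun s => F s * G s) Filter.atTop Filter.atTop)
    (hlam : ∀ j, 0 ≤ lam j)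
    (ha : Summable (fun j => (a j) ^ 2))
    (hapos : 0 < ∑' j, (a j) ^ 2)
    (hFG : Summable (fun j => (F (lam j)) ^ 2 * (G (lam j)) ^ 2 * (a j) ^ 2)) :
    Summable (fun j => (F (lam j)) ^ 2 * (a j) ^ 2) ∧
    Summable (fun j => (G (lam j)) ^ 2 * (a j) ^ 2) ∧
    Real.sqrt (∑' j, (F (lam j)) ^ 2 * (a j) ^ 2) *
        Real.sqrt (∑' j, (G (lam j)) ^ 2 * (a j) ^ 2)
      ≤ 2 * Real.sqrt (∑' j, (F (lam j)) ^ 2 * (G (lam j)) ^ 2 * (a j) ^ 2) *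
          Real.sqrt (∑' j, (a j) ^ 2) :=
  statement2_general F G lam a hFnonneg hGnonneg hFmono hGmono hFGtop hlam ha hFG
end

section
/- Let (λ_j)_{j∈ℕ} be a sequence of nonnegative real numbers, (a_j)_{j∈ℕ} a sequence of real numbers with 0 < Σ_j a_j² < ∞, and let σ > 0 be such that Σ_j (1+λ_j)^σ a_j² < ∞. Let H : [0,∞) → (0,∞) be nonincreasing with H(s) → 0 as s → +∞. Then ( Σ_j (1+λ_j)^σ H(λ_j)² a_j² ) / ( Σ_j H(λ_j)² a_j² ) ≤ 4 · ( Σ_j (1+λ_j)^σ a_j² ) / ( Σ_j a_j² ). -/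
/-! Writing `wⱼ = (1+λⱼ)^σ`, `gⱼ = H(λⱼ)²` and `pⱼ = aⱼ²`, the weight `w` increases and `g`
decreases in `λ`. With the mean `m = (∑ w p)/(∑ p) ≥ 1` and the point `T ≥ 0` where
`(1+T)^σ = m`, every term of `∑ (wⱼ - m)(gⱼ - H(T)²) pⱼ` is nonpositive while
`∑ (wⱼ - m) pⱼ = 0`; hence `∑ w g p ≤ m ∑ g p`, which is the claim even with `1` in place
of `4`. -/

lemma sub_mul_sub_nonpos_of_monotoneOn_of_antitoneOn {α : Type*} [LinearOrder α]
    {φ ψ : α → ℝ} {s : Set α} (hφ : MonotoneOn φ s) (hψ : AntitoneOn ψ s) {t x : α}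
    (ht : t ∈ s) (hx : x ∈ s) : (φ x - φ t) * (ψ x - ψ t) ≤ 0 := by
  rcases le_total x t with hxt | htx
  · exact mul_nonpos_of_nonpos_of_nonneg (sub_nonpos.2 (hφ hx ht hxt))
      (sub_nonneg.2 (hψ hx ht hxt))
  · exact mul_nonpos_of_nonneg_of_nonpos (sub_nonneg.2 (hφ ht hx htx))
      (sub_nonpos.2 (hψ ht hx htx))

lemma tsum_mul_mul_le_of_sub_mul_sub_nonpos {p w g : ℕ → ℝ} {m g₀ : ℝ} (hp : ∀ j, 0 ≤ p j)
    (hp_sum : Summable p) (hwp : Summable fun j => w j * p j)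
    (hgp : Summable fun j => g j * p j) (hwgp : Summable fun j => w j * g j * p j)
    (hmean : ∑' j, w j * p j = m * ∑' j, p j) (hcross : ∀ j, (w j - m) * (g j - g₀) ≤ 0) :
    ∑' j, w j * g j * p j ≤ m * ∑' j, g j * p j := by
  have hdev : Summable fun j => w j * p j - m * p j := hwp.sub (hp_sum.mul_left m)
  calc ∑' j, w j * g j * p j
      ≤ ∑' j, (m * (g j * p j) + g₀ * (w j * p j - m * p j)) := by
        refine (hwgp.tsum_le_tsum (fun j => ?_) ((hgp.mul_left m).add (hdev.mul_left g₀)))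
        nlinarith [mul_nonpos_of_nonpos_of_nonneg (hcross j) (hp j)]
    _ = m * ∑' j, g j * p j + g₀ * (∑' j, w j * p j - m * ∑' j, p j) := by
        rw [(hgp.mul_left m).tsum_add (hdev.mul_left g₀), tsum_mul_left, tsum_mul_left,
          hwp.tsum_sub (hp_sum.mul_left m), tsum_mul_left]
    _ = m * ∑' j, g j * p j := by rw [hmean, sub_self, mul_zero, add_zero]

lemma Summable.mul_of_nonneg_of_le {f g : ℕ → ℝ} {C : ℝ} (hf : Summable f)
    (hf₀ : ∀ j, 0 ≤ f j) (hg₀ : ∀ j, 0 ≤ g j) (hgC : ∀ j, g j ≤ C) :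
    Summable fun j => g j * f j :=
  Summable.of_nonneg_of_le (fun j => mul_nonneg (hg₀ j) (hf₀ j))
    (fun j => mul_le_mul_of_nonneg_right (hgC j) (hf₀ j)) (hf.mul_left C)

lemma exists_one_add_rpow_eq {σ m : ℝ} (hσ : 0 < σ) (hm : 1 ≤ m) :
    ∃ T, 0 ≤ T ∧ (1 + T) ^ σ = m :=
  ⟨m ^ σ⁻¹ - 1, sub_nonneg.2 (Real.one_le_rpow hm (inv_nonneg.2 hσ.le)), by
    rw [add_sub_cancel, Real.rpow_inv_rpow (by linarith) hσ.ne']⟩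

theorem statement3_general (lam a : ℕ → ℝ) (σ : ℝ) (H : ℝ → ℝ)
    (hlam : ∀ j, 0 ≤ lam j)
    (hσ : 0 < σ)
    (ha : Summable (fun j => (a j) ^ 2))
    (hapos : 0 < ∑' j, (a j) ^ 2)
    (hsob : Summable (fun j => (1 + lam j) ^ σ * (a j) ^ 2))
    (hHpos : ∀ s, 0 ≤ s → 0 < H s)
    (hHanti : AntitoneOn H (Set.Ici (0 : ℝ))) :
    (∑' j, (1 + lam j) ^ σ * (H (lam j)) ^ 2 * (a j) ^ 2) /
        (∑' j, (H (lam j)) ^ 2 * (a j) ^ 2)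
      ≤ 4 * (∑' j, (1 + lam j) ^ σ * (a j) ^ 2) / (∑' j, (a j) ^ 2) := by
  have hw : MonotoneOn (fun x : ℝ => (1 + x) ^ σ) (Set.Ici 0) := fun x hx y _ hxy =>
    Real.rpow_le_rpow (by linarith [Set.mem_Ici.1 hx]) (by linarith) hσ.le
  have hg : AntitoneOn (fun x => H x ^ 2) (Set.Ici 0) := fun x hx y hy hxy =>
    pow_le_pow_left₀ (hHpos y hy).le (hHanti hx hy hxy) 2
  have hg₀ : ∀ j, 0 ≤ H (lam j) ^ 2 := fun j => sq_nonneg _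
  have hgC : ∀ j, H (lam j) ^ 2 ≤ H 0 ^ 2 := fun j => hg Set.self_mem_Ici (hlam j) (hlam j)
  have hpw : ∀ j, a j ^ 2 ≤ (1 + lam j) ^ σ * a j ^ 2 := fun j =>
    le_mul_of_one_le_left (sq_nonneg _) (Real.one_le_rpow (by linarith [hlam j]) hσ.le)
  set m := (∑' j, (1 + lam j) ^ σ * a j ^ 2) / ∑' j, a j ^ 2
  have hm : 1 ≤ m := (one_le_div hapos).2 (ha.tsum_le_tsum hpw hsob)
  obtain ⟨T, hT, hTm⟩ := exists_one_add_rpow_eq hσ hm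
  have hN : ∑' j, (1 + lam j) ^ σ * H (lam j) ^ 2 * a j ^ 2 ≤
      m * ∑' j, H (lam j) ^ 2 * a j ^ 2 :=
    tsum_mul_mul_le_of_sub_mul_sub_nonpos (g₀ := H T ^ 2) (fun j => sq_nonneg _) ha hsob
      (ha.mul_of_nonneg_of_le (fun j => sq_nonneg _) hg₀ hgC)
      ((hsob.mul_of_nonneg_of_le (fun j => (sq_nonneg _).trans (hpw j)) hg₀ hgC).congr
        fun j => by ring)
      (div_mul_cancel₀ _ hapos.ne').symm
      (fun j => hTm ▸ sub_mul_sub_nonpos_of_monotoneOn_of_antitoneOn hw hg hT (hlam j))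
  calc _ ≤ m := div_le_of_le_mul₀ (tsum_nonneg fun j => mul_nonneg (hg₀ j) (sq_nonneg _))
        (by linarith) hN
    _ ≤ 4 * m := by linarith
    _ = _ := (mul_div_assoc _ _ _).symm

/-- Spectral-coefficient form of `Λ_σ(H(L)u) ≤ 2 Λ_σ(u)` for a nonincreasing
positive `H` tending to `0` at infinity:
`(∑ (1+λⱼ)^σ H(λⱼ)² aⱼ²)/(∑ H(λⱼ)² aⱼ²) ≤ 4 (∑ (1+λⱼ)^σ aⱼ²)/(∑ aⱼ²)`. -/
theorem statement3 (lam a : ℕ → ℝ) (σ : ℝ) (H : ℝ → ℝ)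
    (hlam : ∀ j, 0 ≤ lam j)
    (hσ : 0 < σ)
    (ha : Summable (fun j => (a j) ^ 2))
    (hapos : 0 < ∑' j, (a j) ^ 2)
    (hsob : Summable (fun j => (1 + lam j) ^ σ * (a j) ^ 2))
    (hHpos : ∀ s, 0 ≤ s → 0 < H s)
    (hHanti : AntitoneOn H (Set.Ici (0 : ℝ)))
    (hH0 : Filter.Tendsto H Filter.atTop (nhds 0)) :
    (∑' j, (1 + lam j) ^ σ * (H (lam j)) ^ 2 * (a j) ^ 2) /
        (∑' j, (H (lam j)) ^ 2 * (a j) ^ 2)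
      ≤ 4 * (∑' j, (1 + lam j) ^ σ * (a j) ^ 2) / (∑' j, (a j) ^ 2) :=
  statement3_general lam a σ H hlam hσ ha hapos hsob hHpos hHanti
end

section
/- Fix α > 0 and T > 0, and set I(T,λ) = ∫₀^T exp(−α(1/t + 1/(T−t))) e^{−λ t} dt. Then there exist C_T > 0 and λ₀ > 0 such that for every λ ≥ λ₀ there is a real number R(T,λ) with |R(T,λ)| ≤ C_T and I(T,λ) = √π · (α^{1/4} / λ^{3/4}) · e^{−α/T} · e^{−2√(αλ)} · ( 1 + R(T,λ)/λ^{1/4} ). -/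
/-!
Substituting `t = s ^ 2` and completing the square,
`α / s ^ 2 + λ s ^ 2 = (a s - b / s) ^ 2 + 2 a b` with `a = √λ`, `b = √α`, turns the integral into
`e^{-2√(αλ)} ∫₀^∞ 2 s ω(s ^ 2) e^{-(a s - b / s) ^ 2} ds`, where `ω(t) = e^{-α/(T-t)}` for `t < T`.
The profile `e^{-(a s - b / s) ^ 2}` has total mass exactly `√π / (2a)` (Glasser's identity),
sits at `s₀ = (α/λ)^{1/4}` and is dominated by the Gaussian `e^{-a ^ 2 (s - s₀) ^ 2}`.
Freezing the weight `2 s ω(s ^ 2)` at `2 s₀ e^{-α/T}` gives the main term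
`√π α^{1/4} λ^{-3/4} e^{-α/T}`; the weight moves by `O(s₀ ^ 2 + |s - s₀|)`, so the error is
`O(s₀ ^ 2 / a + 1 / a ^ 2) = O(1/λ)`, which is `λ^{-1/4}` times the main term.
-/

open MeasureTheory Set Real

theorem integral_Ioi_mul_exp_neg_mul_sq {b : ℝ} (hb : 0 < b) :
    ∫ x in Ioi 0, x * exp (-b * x ^ 2) = (2 * b)⁻¹ := by
  have := integral_rpow_mul_exp_neg_mul_rpow two_pos (by norm_num : (-1 : ℝ) < 1) hb
  norm_num [rpow_neg_one] at this
  convert this using 1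
  · refine setIntegral_congr_fun measurableSet_Ioi fun x _ => ?_
    norm_num
  · ring

theorem integrable_abs_mul_exp_neg_mul_sq {b : ℝ} (hb : 0 < b) :
    Integrable fun x : ℝ => |x| * exp (-b * x ^ 2) := by
  simpa [abs_mul] using (integrable_mul_exp_neg_mul_sq hb).abs

theorem integral_abs_mul_exp_neg_mul_sq {b : ℝ} (hb : 0 < b) :
    ∫ x, |x| * exp (-b * x ^ 2) = b⁻¹ := by
  have := integral_comp_abs (f := fun x => x * exp (-b * x ^ 2))
  simp only [sq_abs] at this
  rw [this, integral_Ioi_mul_exp_neg_mul_sq hb]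
  field_simp

theorem integral_Ioi_comp_sq {E : Type*} [NormedAddCommGroup E] [NormedSpace ℝ E] (g : ℝ → E) :
    ∫ s in Ioi 0, (2 * s) • g (s ^ 2) = ∫ t in Ioi 0, g t := by
  rw [← integral_comp_rpow_Ioi g two_ne_zero]
  refine setIntegral_congr_fun measurableSet_Ioi fun s _ => ?_
  norm_num

theorem integral_Ioi_comp_div {E : Type*} [NormedAddCommGroup E] [NormedSpace ℝ E]
    (g : ℝ → E) {c : ℝ} (hc : 0 < c) :
    ∫ s in Ioi 0, (c / s ^ 2) • g (c / s) = ∫ t in Ioi 0, g t := by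
  have h := integral_comp_rpow_Ioi (fun y => g (c * y)) (p := -1) (by norm_num)
  rw [integral_comp_mul_left_Ioi g 0 hc, mul_zero] at h
  rw [← smul_inv_smul₀ hc.ne' (∫ t in Ioi 0, g t), ← h, ← integral_smul]
  refine setIntegral_congr_fun measurableSet_Ioi fun s (hs : 0 < s) => ?_
  simp only [smul_smul]
  congr 1
  · norm_num [rpow_neg hs.le, rpow_two]; field_simp
  · norm_num [rpow_neg_one, div_eq_mul_inv]

section Glasser

variable {a b : ℝ}

theorem hasDerivAt_mul_sub_div {s : ℝ} (hs : s ≠ 0) :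
    HasDerivAt (fun s => a * s - b / s) (a + b / s ^ 2) s := by
  have h : HasDerivAt (fun x => a * x - b * x⁻¹) (a * 1 - b * -(s ^ 2)⁻¹) s :=
    ((hasDerivAt_id' s).const_mul a).sub ((hasDerivAt_inv hs).const_mul b)
  simpa only [div_eq_mul_inv, mul_one, mul_neg, sub_neg_eq_add] using h

theorem strictMonoOn_mul_sub_div (ha : 0 < a) (hb : 0 < b) :
    StrictMonoOn (fun s => a * s - b / s) (Ioi 0) := by
  intro s hs t ht hst
  have : b / t < b / s := div_lt_div_of_pos_left hb hs hst
  dsimp only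
  nlinarith

theorem image_mul_sub_div_Ioi (ha : 0 < a) (hb : 0 < b) :
    (fun s => a * s - b / s) '' Ioi 0 = univ := by
  refine eq_univ_of_forall fun y => ?_
  -- the positive root of `a s ^ 2 - y s - b`
  set r := √(y ^ 2 + 4 * a * b)
  have hr : r ^ 2 = y ^ 2 + 4 * a * b := sq_sqrt (by positivity)
  have hyr : 0 < y + r := by
    have : √(y ^ 2) < r := sqrt_lt_sqrt (sq_nonneg y) (by nlinarith)
    rw [sqrt_sq_eq_abs] at this
    linarith [neg_le_abs y]
  refine ⟨(y + r) / (2 * a), div_pos hyr (by positivity), ?_⟩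
  field_simp
  nlinarith

theorem integrableOn_and_integral_add_div_sq_mul_exp_neg_sq_mul_sub_div (ha : 0 < a)
    (hb : 0 < b) :
    IntegrableOn (fun s => (a + b / s ^ 2) * exp (-(a * s - b / s) ^ 2)) (Ioi 0) ∧
      ∫ s in Ioi 0, (a + b / s ^ 2) * exp (-(a * s - b / s) ^ 2) = √π := by
  have hderiv : ∀ s ∈ Ioi (0 : ℝ),
      HasDerivWithinAt (fun s => a * s - b / s) (a + b / s ^ 2) (Ioi 0) s :=
    fun s hs => (hasDerivAt_mul_sub_div (ne_of_gt hs)).hasDerivWithinAt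
  have hinj := (strictMonoOn_mul_sub_div ha hb).injOn
  have habs : ∀ s ∈ Ioi (0 : ℝ), |a + b / s ^ 2| • exp (-(a * s - b / s) ^ 2) =
      (a + b / s ^ 2) * exp (-(a * s - b / s) ^ 2) := fun s (hs : 0 < s) => by
    rw [abs_of_pos (by positivity), smul_eq_mul]
  have hint := integrableOn_image_iff_integrableOn_abs_deriv_smul measurableSet_Ioi hderiv hinj
    (fun v => exp (-v ^ 2))
  have heq := integral_image_eq_integral_abs_deriv_smul measurableSet_Ioi hderiv hinj
    (fun v => exp (-v ^ 2))
  rw [image_mul_sub_div_Ioi ha hb, integrableOn_univ] at hint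
  rw [image_mul_sub_div_Ioi ha hb, setIntegral_univ, setIntegral_congr_fun measurableSet_Ioi habs]
    at heq
  refine ⟨(hint.mp ?_).congr_fun habs measurableSet_Ioi, ?_⟩
  · simpa using integrable_exp_neg_mul_sq (zero_lt_one' ℝ)
  · rw [← heq]
    simpa using integral_gaussian 1

theorem integral_Ioi_div_sq_mul_exp_neg_sq_mul_sub_div (ha : 0 < a) (hb : 0 < b) :
    ∫ s in Ioi 0, b / s ^ 2 * exp (-(a * s - b / s) ^ 2) =
      a * ∫ s in Ioi 0, exp (-(a * s - b / s) ^ 2) := by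
  -- `s ↦ (b / a) / s` reverses the sign of `a * s - b / s`
  rw [← integral_Ioi_comp_div _ (div_pos hb ha), ← integral_const_mul]
  refine setIntegral_congr_fun measurableSet_Ioi fun s hs => ?_
  have hs : s ≠ 0 := ne_of_gt hs
  have hflip : a * (b / a / s) - b / (b / a / s) = -(a * s - b / s) := by
    field_simp; ring
  rw [smul_eq_mul, hflip, neg_sq]
  field_simp

/-- Glasser's identity. -/
theorem integral_Ioi_exp_neg_sq_mul_sub_div (ha : 0 < a) (hb : 0 < b) :
    ∫ s in Ioi 0, exp (-(a * s - b / s) ^ 2) = √π / (2 * a) := by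
  obtain ⟨hint, hval⟩ := integrableOn_and_integral_add_div_sq_mul_exp_neg_sq_mul_sub_div ha hb
  have hmeas : ∀ g : ℝ → ℝ, Measurable g →
      AEStronglyMeasurable (fun s => g s * exp (-(a * s - b / s) ^ 2)) (volume.restrict (Ioi 0)) :=
    fun g hg => (hg.mul (by fun_prop)).aestronglyMeasurable
  have hF : IntegrableOn (fun s => exp (-(a * s - b / s) ^ 2)) (Ioi 0) := by
    refine (hint.const_mul a⁻¹).mono' (by simpa using hmeas 1 measurable_const) ?_
    filter_upwards [ae_restrict_mem measurableSet_Ioi] with s (hs : 0 < s)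
    rw [norm_of_nonneg (exp_pos _).le, ← mul_assoc, mul_add, inv_mul_cancel₀ ha.ne']
    have : 0 ≤ a⁻¹ * (b / s ^ 2) := by positivity
    nlinarith [exp_pos (-(a * s - b / s) ^ 2)]
  have hbF : IntegrableOn (fun s => b / s ^ 2 * exp (-(a * s - b / s) ^ 2)) (Ioi 0) := by
    refine hint.mono' (hmeas _ (by fun_prop)) ?_
    filter_upwards [ae_restrict_mem measurableSet_Ioi] with s (hs : 0 < s)
    rw [norm_of_nonneg (by positivity)]
    gcongr
    linarith
  have hsplit := integral_add (hF.const_mul a) hbF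
  simp only [← add_mul] at hsplit
  rw [hval, integral_const_mul, integral_Ioi_div_sq_mul_exp_neg_sq_mul_sub_div ha hb] at hsplit
  rw [hsplit]
  field_simp
  ring

end Glasser

theorem exp_neg_sq_mul_sub_div_le {a b s₀ s : ℝ} (hs₀ : 0 < s₀) (hb : a * s₀ ^ 2 = b)
    (hs : 0 < s) : exp (-(a * s - b / s) ^ 2) ≤ exp (-a ^ 2 * (s - s₀) ^ 2) := by
  rw [exp_le_exp, neg_mul, neg_le_neg_iff, ← hb]
  have hfac : a * s - a * s₀ ^ 2 / s = a * (s - s₀) * (1 + s₀ / s) := by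
    field_simp; ring
  have h1 : 1 ≤ 1 + s₀ / s := le_add_of_nonneg_right (by positivity)
  rw [hfac, mul_pow, mul_pow, ← mul_pow]
  nlinarith [sq_nonneg (a * (s - s₀)), one_le_pow₀ (n := 2) h1]

theorem integrable_and_integral_add_mul_abs_sub_mul_exp_neg_mul_sq {a : ℝ} (ha : 0 < a)
    (s₀ L₀ L₁ : ℝ) :
    Integrable (fun s => (L₀ + L₁ * |s - s₀|) * exp (-a ^ 2 * (s - s₀) ^ 2)) ∧
      ∫ s, (L₀ + L₁ * |s - s₀|) * exp (-a ^ 2 * (s - s₀) ^ 2) = L₀ * (√π / a) + L₁ / a ^ 2 := by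
  have ha2 : 0 < a ^ 2 := by positivity
  have hsplit : (fun s => (L₀ + L₁ * |s - s₀|) * exp (-a ^ 2 * (s - s₀) ^ 2)) =
      (fun v => L₀ * exp (-a ^ 2 * v ^ 2) + L₁ * (|v| * exp (-a ^ 2 * v ^ 2))) ∘
        fun s => s - s₀ := by
    ext s; simp only [Function.comp]; ring
  have h₀ := (integrable_exp_neg_mul_sq ha2).const_mul L₀
  have h₁ := (integrable_abs_mul_exp_neg_mul_sq ha2).const_mul L₁
  rw [hsplit]
  refine ⟨(h₀.add h₁).comp_sub_right s₀, ?_⟩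
  rw [Function.comp_def, integral_sub_right_eq_self (fun v => L₀ * exp (-a ^ 2 * v ^ 2) +
      L₁ * (|v| * exp (-a ^ 2 * v ^ 2))) s₀, integral_add h₀ h₁, integral_const_mul,
    integral_const_mul, integral_gaussian, integral_abs_mul_exp_neg_mul_sq ha2,
    sqrt_div pi_pos.le, sqrt_sq ha.le]
  ring

theorem abs_integral_Ioi_mul_exp_neg_sq_mul_sub_div_sub_le {a b s₀ w₀ L₀ L₁ : ℝ} {w : ℝ → ℝ}
    (ha : 0 < a) (hs₀ : 0 < s₀) (hb : a * s₀ ^ 2 = b) (hL₀ : 0 ≤ L₀) (hL₁ : 0 ≤ L₁)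
    (hw : AEStronglyMeasurable w (volume.restrict (Ioi 0)))
    (hw_le : ∀ s, 0 < s → |w s - w₀| ≤ L₀ + L₁ * |s - s₀|) :
    |(∫ s in Ioi 0, w s * exp (-(a * s - b / s) ^ 2)) - w₀ * (√π / (2 * a))| ≤
      L₀ * (√π / a) + L₁ / a ^ 2 := by
  obtain ⟨hg, hg_val⟩ := integrable_and_integral_add_mul_abs_sub_mul_exp_neg_mul_sq ha s₀ L₀ L₁
  have hF_meas : AEStronglyMeasurable (fun s => exp (-(a * s - b / s) ^ 2))
      (volume.restrict (Ioi 0)) := by fun_prop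
  have hF : IntegrableOn (fun s => exp (-(a * s - b / s) ^ 2)) (Ioi 0) := by
    refine (integrable_exp_neg_mul_sq (by positivity : 0 < a ^ 2)).comp_sub_right s₀
      |>.integrableOn.mono' hF_meas ?_
    filter_upwards [ae_restrict_mem measurableSet_Ioi] with s (hs : 0 < s)
    rw [norm_of_nonneg (exp_pos _).le]
    exact exp_neg_sq_mul_sub_div_le hs₀ hb hs
  have hdom : ∀ᵐ s ∂(volume.restrict (Ioi 0)),
      ‖(w s - w₀) * exp (-(a * s - b / s) ^ 2)‖ ≤
        (L₀ + L₁ * |s - s₀|) * exp (-a ^ 2 * (s - s₀) ^ 2) := by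
    filter_upwards [ae_restrict_mem measurableSet_Ioi] with s (hs : 0 < s)
    rw [norm_mul, norm_of_nonneg (exp_pos _).le, norm_eq_abs]
    exact mul_le_mul (hw_le s hs) (exp_neg_sq_mul_sub_div_le hs₀ hb hs) (exp_pos _).le
      (by positivity)
  have hdiff : IntegrableOn (fun s => (w s - w₀) * exp (-(a * s - b / s) ^ 2)) (Ioi 0) :=
    hg.integrableOn.mono' ((hw.sub aestronglyMeasurable_const).mul hF_meas) hdom
  have hsplit : ∫ s in Ioi 0, w s * exp (-(a * s - b / s) ^ 2) =
      (∫ s in Ioi 0, (w s - w₀) * exp (-(a * s - b / s) ^ 2)) +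
        w₀ * ∫ s in Ioi 0, exp (-(a * s - b / s) ^ 2) := by
    rw [← integral_const_mul, ← integral_add hdiff (hF.const_mul w₀)]
    congr 1 with s
    ring
  rw [hsplit, integral_Ioi_exp_neg_sq_mul_sub_div ha (hb ▸ by positivity), add_sub_cancel_right,
    ← hg_val]
  calc |∫ s in Ioi 0, (w s - w₀) * exp (-(a * s - b / s) ^ 2)|
      ≤ ∫ s in Ioi 0, (L₀ + L₁ * |s - s₀|) * exp (-a ^ 2 * (s - s₀) ^ 2) :=
        norm_integral_le_of_norm_le hg.integrableOn hdom
    _ ≤ ∫ s, (L₀ + L₁ * |s - s₀|) * exp (-a ^ 2 * (s - s₀) ^ 2) :=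
        setIntegral_le_integral hg (.of_forall fun s => by positivity)

/-- The factor `e^{-α/(T-t)}` of the kernel, extended by `0` for `t ≥ T`, so that integrals over
`(0, T)` become integrals over `(0, ∞)`. -/
noncomputable def rightEndWeight (α T t : ℝ) : ℝ :=
  if t < T then exp (-α / (T - t)) else 0

section RightEndWeight

variable {α T : ℝ}

theorem measurable_rightEndWeight : Measurable (rightEndWeight α T) :=
  Measurable.ite measurableSet_Iio (by fun_prop) measurable_const

theorem rightEndWeight_nonneg (t : ℝ) : 0 ≤ rightEndWeight α T t := by
  unfold rightEndWeight; split_ifs <;> positivity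

theorem rightEndWeight_le (hα : 0 ≤ α) {t : ℝ} (ht : 0 ≤ t) :
    rightEndWeight α T t ≤ exp (-α / T) := by
  unfold rightEndWeight
  split_ifs with htT
  · rw [exp_le_exp, neg_div, neg_div, neg_le_neg_iff]
    exact div_le_div_of_nonneg_left hα (by linarith) (by linarith)
  · positivity

theorem sub_rightEndWeight_le (hα : 0 ≤ α) (hT : 0 < T) {t : ℝ} (ht : 0 ≤ t) :
    exp (-α / T) - rightEndWeight α T t ≤ exp (-α / T) * (2 * (α / T + 1) / T * t) := by
  by_cases hmid : 2 * t ≤ T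
  · -- `1 - e^{-x} ≤ x` with `x = α / (T - t) - α / T`
    have htT : t < T := by linarith
    have hTt : 0 < T - t := by linarith
    have hx : α / (T - t) - α / T ≤ 2 * (α / T + 1) / T * t := by
      have : α * t * T ≤ α * t * (2 * (T - t)) := by gcongr; linarith
      rw [div_sub_div _ _ hTt.ne' hT.ne', div_le_iff₀ (by positivity)]
      field_simp
      nlinarith [mul_nonneg ht hTt.le]
    have hexp : exp (-α / (T - t)) = exp (-α / T) * exp (-(α / (T - t) - α / T)) := by
      rw [← exp_add]; ring_nf
    rw [rightEndWeight, if_pos htT, hexp]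
    nlinarith [add_one_le_exp (-(α / (T - t) - α / T)), exp_pos (-α / T)]
  · have h1 : 1 ≤ 2 * (α / T + 1) / T * t := by
      rw [div_mul_eq_mul_div, le_div_iff₀ hT]
      nlinarith [div_nonneg hα hT.le]
    nlinarith [rightEndWeight_nonneg (α := α) (T := T) t, exp_pos (-α / T)]

theorem abs_rightEndWeight_sq_sub_le (hα : 0 ≤ α) (hT : 0 < T) {s : ℝ} (hs : 0 ≤ s) :
    |rightEndWeight α T (s ^ 2) - exp (-α / T)| ≤
      exp (-α / T) * (√(2 * (α / T + 1) / T) * s) := by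
  set G₀ := exp (-α / T)
  have hG₀ : 0 < G₀ := exp_pos _
  have hω := rightEndWeight_le (T := T) hα (sq_nonneg s)
  set x := 1 - rightEndWeight α T (s ^ 2) / G₀
  have hx0 : 0 ≤ x := by
    rw [sub_nonneg, div_le_one hG₀]; exact hω
  have hx1 : x ≤ 1 := by
    have := div_nonneg (rightEndWeight_nonneg (α := α) (T := T) (s ^ 2)) hG₀.le
    linarith
  have hxκ : x ≤ 2 * (α / T + 1) / T * s ^ 2 := by
    have := sub_rightEndWeight_le hα hT (sq_nonneg s)
    simp only [x]
    rw [one_sub_div hG₀.ne', div_le_iff₀ hG₀]; linarith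
  -- `x ≤ 1` and `x ≤ κ s ^ 2` give `x ^ 2 ≤ κ s ^ 2`
  have hx : x ≤ √(2 * (α / T + 1) / T) * s := by
    rw [← sqrt_sq hs, ← sqrt_mul (by positivity)]
    exact le_sqrt_of_sq_le (by nlinarith)
  rw [abs_sub_comm, abs_of_nonneg (by linarith)]
  calc G₀ - rightEndWeight α T (s ^ 2) = G₀ * x := by simp only [x]; field_simp
    _ ≤ G₀ * (√(2 * (α / T + 1) / T) * s) := by gcongr

end RightEndWeight

theorem integral_eq_exp_mul_integral_Ioi {α lam a b T : ℝ} (ha : a ^ 2 = lam) (hb : b ^ 2 = α)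
    (hT : 0 ≤ T) :
    (∫ t in (0 : ℝ)..T, exp (-α * (1 / t + 1 / (T - t))) * exp (-lam * t)) =
      exp (-2 * (a * b)) *
        ∫ s in Ioi 0, 2 * s * rightEndWeight α T (s ^ 2) * exp (-(a * s - b / s) ^ 2) := by
  have htrunc : (∫ t in (0 : ℝ)..T, exp (-α * (1 / t + 1 / (T - t))) * exp (-lam * t)) =
      ∫ t in Ioi 0, exp (-α / t - lam * t) * rightEndWeight α T t := by
    rw [intervalIntegral.integral_of_le hT, integral_Ioc_eq_integral_Ioo, ← Ioi_inter_Iio,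
      ← setIntegral_indicator measurableSet_Iio]
    refine setIntegral_congr_fun measurableSet_Ioi fun t _ => ?_
    by_cases htT : t < T
    · rw [indicator_of_mem (show t ∈ Iio T from htT), rightEndWeight, if_pos htT]
      simp only [← exp_add]
      ring_nf
    · rw [indicator_of_notMem (show t ∉ Iio T from htT), rightEndWeight, if_neg htT, mul_zero]
  rw [htrunc, ← integral_Ioi_comp_sq, ← integral_const_mul]
  refine setIntegral_congr_fun measurableSet_Ioi fun s (hs : 0 < s) => ?_
  have hsq : -α / s ^ 2 - lam * s ^ 2 = -2 * (a * b) + -(a * s - b / s) ^ 2 := by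
    rw [← ha, ← hb]; field_simp; ring
  rw [smul_eq_mul, hsq, exp_add]
  ring

theorem abs_integral_Ioi_rightEndWeight_sub_le {α T a b s₀ : ℝ} (hα : 0 ≤ α) (hT : 0 < T)
    (ha : 0 < a) (hs₀ : 0 < s₀) (hb : a * s₀ ^ 2 = b) :
    |(∫ s in Ioi 0, 2 * s * rightEndWeight α T (s ^ 2) * exp (-(a * s - b / s) ^ 2)) -
        exp (-α / T) * (√π * s₀ / a)| ≤
      exp (-α / T) * (2 * √(2 * (α / T + 1) / T) * s₀ ^ 2 * (√π / a) +
        2 * (1 + √(2 * (α / T + 1) / T) * s₀) / a ^ 2) := by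
  set G₀ := exp (-α / T)
  set k := √(2 * (α / T + 1) / T)
  have hw : Measurable fun s : ℝ => 2 * s * rightEndWeight α T (s ^ 2) :=
    (measurable_id.const_mul 2).mul (measurable_rightEndWeight.comp (measurable_id.pow_const 2))
  have hw_le : ∀ s, 0 < s → |2 * s * rightEndWeight α T (s ^ 2) - 2 * s₀ * G₀| ≤
      2 * G₀ * k * s₀ ^ 2 + 2 * G₀ * (1 + k * s₀) * |s - s₀| := by
    intro s hs
    have hω := abs_rightEndWeight_sq_sub_le hα hT hs.le
    have hω₀ := rightEndWeight_le (T := T) hα (sq_nonneg s)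
    have hω₁ := rightEndWeight_nonneg (α := α) (T := T) (s ^ 2)
    have hs_le : s ≤ s₀ + |s - s₀| := by linarith [le_abs_self (s - s₀)]
    calc |2 * s * rightEndWeight α T (s ^ 2) - 2 * s₀ * G₀|
        = |2 * (s - s₀) * rightEndWeight α T (s ^ 2) +
            2 * s₀ * (rightEndWeight α T (s ^ 2) - G₀)| := by ring_nf
      _ ≤ 2 * |s - s₀| * G₀ + 2 * s₀ * (G₀ * (k * s)) := by
          refine (abs_add_le _ _).trans (add_le_add ?_ ?_)
          · rw [abs_mul, abs_mul, abs_two, abs_of_nonneg hω₁]; gcongr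
          · rw [abs_mul, abs_mul, abs_two, abs_of_pos hs₀]; gcongr
      _ ≤ 2 * G₀ * k * s₀ ^ 2 + 2 * G₀ * (1 + k * s₀) * |s - s₀| := by
          have := mul_le_mul_of_nonneg_left hs_le (by positivity : 0 ≤ 2 * s₀ * G₀ * k)
          nlinarith
  have := abs_integral_Ioi_mul_exp_neg_sq_mul_sub_div_sub_le ha hs₀ hb (by positivity)
    (by positivity) hw.aestronglyMeasurable hw_le
  convert this using 3
  · field_simp
  · ring

theorem abs_integral_Ioi_rightEndWeight_sub_le_of_one_le {α T p q : ℝ} (hα : 0 ≤ α) (hT : 0 < T)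
    (hp : 1 ≤ p) (hq : 0 < q) :
    |(∫ s in Ioi 0, 2 * s * rightEndWeight α T (s ^ 2) * exp (-(p ^ 2 * s - q ^ 2 / s) ^ 2)) -
        exp (-α / T) * (√π * q / p ^ 3)| ≤
      exp (-α / T) * ((2 * √(2 * (α / T + 1) / T) * q ^ 2 * √π + 2 +
        2 * √(2 * (α / T + 1) / T) * q) / p ^ 4) := by
  have hp0 : 0 < p := by linarith
  have h := abs_integral_Ioi_rightEndWeight_sub_le hα hT (by positivity) (div_pos hq hp0)
    (by field_simp : p ^ 2 * (q / p) ^ 2 = q ^ 2)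
  rw [show √π * (q / p) / p ^ 2 = √π * q / p ^ 3 by field_simp] at h
  have hk : 0 ≤ √(2 * (α / T + 1) / T) := sqrt_nonneg _
  generalize √(2 * (α / T + 1) / T) = k at hk h ⊢
  calc _ ≤ _ := h
    _ = exp (-α / T) * ((2 * k * q ^ 2 * √π + 2 + 2 * k * (q / p)) / p ^ 4) := by
        field_simp; ring
    _ ≤ _ := by gcongr; exact div_le_self hq.le hp

theorem exists_abs_le_and_eq_mul_one_add_div {J M p C : ℝ} (hM : 0 < M) (hp : 0 < p)
    (h : |J - M| ≤ C * M / p) : ∃ R, |R| ≤ C ∧ J = M * (1 + R / p) := by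
  refine ⟨(J - M) / M * p, ?_, by field_simp; ring⟩
  rw [abs_mul, abs_div, abs_of_pos hM, abs_of_pos hp, div_mul_eq_mul_div, div_le_iff₀ hM]
  rwa [le_div_iff₀ hp] at h

theorem rpow_one_div_four_pow {x : ℝ} (hx : 0 ≤ x) (n : ℕ) :
    (x ^ (1 / 4 : ℝ)) ^ n = x ^ ((n : ℝ) / 4) := by
  rw [← rpow_natCast, ← rpow_mul hx]; ring_nf

/-- Asymptotic expansion of the Laplace-type integral
`I(T,λ) = ∫₀^T e^{-α(1/t + 1/(T-t))} e^{-λt} dt` as `λ → +∞`: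
`I(T,λ) = √π (α^{1/4}/λ^{3/4}) e^{-α/T} e^{-2√(αλ)} (1 + R(T,λ)/λ^{1/4})`
with `|R(T,λ)| ≤ C_T`. -/
theorem statement5 (α T : ℝ) (hα : 0 < α) (hT : 0 < T) :
    ∃ C_T > (0 : ℝ), ∃ lam₀ > (0 : ℝ), ∀ lam ≥ lam₀, ∃ R : ℝ, |R| ≤ C_T ∧
      (∫ t in (0:ℝ)..T, Real.exp (-α * (1 / t + 1 / (T - t))) * Real.exp (-lam * t))
        = Real.sqrt Real.pi * (α ^ ((1:ℝ)/4) / lam ^ ((3:ℝ)/4)) * Real.exp (-α / T)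
            * Real.exp (-2 * Real.sqrt (α * lam)) * (1 + R / lam ^ ((1:ℝ)/4)) := by
  set q := α ^ (1 / 4 : ℝ)
  set k := √(2 * (α / T + 1) / T) with hk
  have hq : 0 < q := rpow_pos_of_pos hα _
  have hq4 : q ^ 4 = α := by rw [rpow_one_div_four_pow hα.le]; norm_num
  set C := (2 * k * q ^ 2 * √π + 2 + 2 * k * q) / (√π * q)
  refine ⟨C, by positivity, 1, one_pos, fun lam hlam => ?_⟩
  set p := lam ^ (1 / 4 : ℝ)
  have hp : 1 ≤ p := one_le_rpow hlam (by norm_num)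
  have hp4 : p ^ 4 = lam := by rw [rpow_one_div_four_pow (by linarith)]; norm_num
  have hp3 : lam ^ (3 / 4 : ℝ) = p ^ 3 := by rw [rpow_one_div_four_pow (by linarith)]; norm_num
  have hsqrt : √(α * lam) = p ^ 2 * q ^ 2 := by
    rw [← hq4, ← hp4, show q ^ 4 * p ^ 4 = (p ^ 2 * q ^ 2) ^ 2 by ring, sqrt_sq (by positivity)]
  have hI := integral_eq_exp_mul_integral_Ioi (T := T) (by rw [← hp4]; ring : (p ^ 2) ^ 2 = lam)
    (by rw [← hq4]; ring : (q ^ 2) ^ 2 = α) hT.le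
  have hJ := abs_integral_Ioi_rightEndWeight_sub_le_of_one_le hα.le hT hp hq
  rw [← hk] at hJ
  obtain ⟨R, hR, hJR⟩ := exists_abs_le_and_eq_mul_one_add_div (C := C) (p := p) (by positivity)
    (by positivity) (hJ.trans_eq (by simp only [C]; field_simp))
  refine ⟨R, hR, ?_⟩
  rw [hI, hJR, hp3, hsqrt]
  field_simp
end

section
/- Fix α > 0 and T > 0, and set I(T,λ) = ∫₀^T exp(−α(1/t + 1/(T−t))) e^{−λ t} dt. Then there exists C > 1 such that for all λ ≥ 0: C^{-1} · e^{−2√(αλ)} / (1+λ)^{3/4} ≤ I(T,λ) ≤ C · e^{−2√(αλ)} / (1+λ)^{3/4}. -/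
/-!
With `t₀ = √(α/λ)` one has `α/t + λt = 2√(αλ) + λ(t - t₀)²/t`, so for large `λ` the integrand
is `e^{-2√(αλ)}` times a bump at `t₀ → 0` of width `δ = √(t₀/λ) ≍ (1 + λ)^{-3/4}`, while the
factor `e^{-α/(T-t)}` stays between `e^{-2α/T}` and `1` near `t₀`. Integrating over
`[t₀, t₀ + δ]` gives the lower bound; dominating the bump by a Gaussian of the same width for
`t ≤ 2t₀` and by `e^{-λt/4}` beyond gives the upper bound. On a bounded range of `λ` both sides
are positive and decreasing, so the comparison at its right end extends to all `λ ≥ 0`.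
-/

open MeasureTheory Set Filter Real Topology

theorem exists_two_sided_bound_of_antitoneOn {f g : ℝ → ℝ}
    (hf : AntitoneOn f (Ici 0)) (hg : AntitoneOn g (Ici 0)) (hg_pos : ∀ x ≥ 0, 0 < g x)
    {c K : ℝ} (hc : 0 < c) (hlow : ∀ᶠ x in atTop, c * g x ≤ f x)
    (hup : ∀ᶠ x in atTop, f x ≤ K * g x) :
    ∃ C, 1 < C ∧ ∀ x ≥ 0, C⁻¹ * g x ≤ f x ∧ f x ≤ C * g x := by
  obtain ⟨a, ha⟩ := eventually_atTop.1 (hlow.and hup)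
  set x₀ := max a 0
  have hx₀ : 0 ≤ x₀ := le_max_right a 0
  have hgx₀ := hg_pos x₀ hx₀
  have hg₀ : g x₀ ≤ g 0 := hg self_mem_Ici hx₀ hx₀
  have hf₀ : c * g x₀ ≤ f 0 := (ha x₀ (le_max_left a 0)).1.trans (hf self_mem_Ici hx₀ hx₀)
  have hf₀_pos : 0 < f 0 / g x₀ := div_pos ((mul_pos hc hgx₀).trans_le hf₀) hgx₀
  set C := max K (f 0 / g x₀) + g 0 / (c * g x₀) + 1
  have hr_pos : 0 < g 0 / (c * g x₀) := div_pos (hgx₀.trans_le hg₀) (mul_pos hc hgx₀)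
  have hK_max := le_max_left K (f 0 / g x₀)
  have hf_max := le_max_right K (f 0 / g x₀)
  have hC_K : K ≤ C := by linarith
  have hC_f : f 0 / g x₀ ≤ C := by linarith
  have hC_inv : C⁻¹ ≤ c * g x₀ / g 0 := by
    rw [← inv_div]; exact inv_anti₀ hr_pos (by linarith)
  have hc_le : c * g x₀ / g 0 ≤ c := by
    rw [div_le_iff₀ (hgx₀.trans_le hg₀)]; exact mul_le_mul_of_nonneg_left hg₀ hc.le
  refine ⟨C, by linarith, fun x hx => ?_⟩
  have hgx := hg_pos x hx
  rcases le_total x₀ x with hx₀x | hxx₀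
  · obtain ⟨hlow, hup⟩ := ha x ((le_max_left a 0).trans hx₀x)
    exact ⟨(mul_le_mul_of_nonneg_right (hC_inv.trans hc_le) hgx.le).trans hlow,
      hup.trans (mul_le_mul_of_nonneg_right hC_K hgx.le)⟩
  · constructor
    · calc C⁻¹ * g x ≤ c * g x₀ / g 0 * g 0 :=
            mul_le_mul hC_inv (hg self_mem_Ici hx hx) hgx.le
              (div_pos (mul_pos hc hgx₀) (hgx₀.trans_le hg₀)).le
        _ = c * g x₀ := div_mul_cancel₀ _ (hgx₀.trans_le hg₀).ne'
        _ ≤ f x₀ := (ha x₀ (le_max_left a 0)).1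
        _ ≤ f x := hf hx hx₀ hxx₀
    · calc f x ≤ f 0 := hf self_mem_Ici hx hx
        _ = f 0 / g x₀ * g x₀ := (div_mul_cancel₀ _ hgx₀.ne').symm
        _ ≤ C * g x := mul_le_mul hC_f (hg hx hx₀ hxx₀) hgx₀.le (by linarith)

noncomputable def kernelIntegrand (α T lam t : ℝ) : ℝ :=
  exp (-α * (1 / t + 1 / (T - t))) * exp (-lam * t)

noncomputable def kernelIntegral (α T lam : ℝ) : ℝ :=
  ∫ t in (0 : ℝ)..T, kernelIntegrand α T lam t

noncomputable def decayProfile (α lam : ℝ) : ℝ :=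
  exp (-2 * √(α * lam)) / (1 + lam) ^ (3 / 4 : ℝ)

noncomputable def saddlePoint (α lam : ℝ) : ℝ := √(α / lam)

noncomputable def saddleWidth (α lam : ℝ) : ℝ := √(saddlePoint α lam / lam)

section

variable {α T lam t : ℝ}

lemma kernelIntegrand_le_one (hα : 0 ≤ α) (hlam : 0 ≤ lam) (ht : t ∈ Icc 0 T) :
    kernelIntegrand α T lam t ≤ 1 := by
  have h₁ : 0 ≤ 1 / t := one_div_nonneg.2 ht.1
  have h₂ : 0 ≤ 1 / (T - t) := one_div_nonneg.2 (sub_nonneg.2 ht.2)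
  rw [kernelIntegrand, ← exp_add, exp_le_one_iff]
  nlinarith [mul_nonneg hα (add_nonneg h₁ h₂), mul_nonneg hlam ht.1]

lemma kernelIntegrand_nonneg : 0 ≤ kernelIntegrand α T lam t := by
  unfold kernelIntegrand; positivity

lemma kernelIntegrand_antitone (ht : 0 ≤ t) : Antitone fun lam => kernelIntegrand α T lam t :=
  fun _ _ h => mul_le_mul_of_nonneg_left (exp_le_exp.2 (by nlinarith)) (exp_pos _).le

lemma intervalIntegrable_kernelIntegrand (hα : 0 ≤ α) (hT : 0 ≤ T) (hlam : 0 ≤ lam) :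
    IntervalIntegrable (kernelIntegrand α T lam) volume 0 T := by
  refine (intervalIntegrable_const (c := (1 : ℝ))).mono_fun'
    (by unfold kernelIntegrand; fun_prop) ?_
  rw [uIoc_of_le hT]
  filter_upwards [ae_restrict_mem measurableSet_Ioc] with t ht
  rw [norm_of_nonneg kernelIntegrand_nonneg]
  exact kernelIntegrand_le_one hα hlam (Ioc_subset_Icc_self ht)

theorem antitoneOn_kernelIntegral (hα : 0 ≤ α) (hT : 0 ≤ T) :
    AntitoneOn (kernelIntegral α T) (Ici 0) := fun _ hl _ hm hlm =>
  intervalIntegral.integral_mono_on hT (intervalIntegrable_kernelIntegrand hα hT hm)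
    (intervalIntegrable_kernelIntegrand hα hT hl) fun _ ht => kernelIntegrand_antitone ht.1 hlm

lemma decayProfile_pos (lam : ℝ) (hlam : 0 ≤ lam) : 0 < decayProfile α lam := by
  unfold decayProfile; positivity

theorem antitoneOn_decayProfile (hα : 0 ≤ α) : AntitoneOn (decayProfile α) (Ici 0) := by
  intro l (hl : 0 ≤ l) m (hm : 0 ≤ m) hlm
  have := sqrt_le_sqrt (mul_le_mul_of_nonneg_left hlm hα)
  exact div_le_div₀ (exp_pos _).le (exp_le_exp.2 (by linarith)) (by positivity)
    (rpow_le_rpow (by linarith) (by linarith) (by norm_num))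

lemma kernelIntegrand_le_exp_neg (hα : 0 ≤ α) (htT : t ≤ T) :
    kernelIntegrand α T lam t ≤ exp (-(α / t + lam * t)) := by
  have := mul_nonneg hα (one_div_nonneg.2 (sub_nonneg.2 htT))
  rw [kernelIntegrand, ← exp_add, exp_le_exp, div_eq_mul_one_div α t]
  linarith

lemma div_add_mul_eq_of_mul_sq_eq {t₀ : ℝ} (h : lam * t₀ ^ 2 = α) (ht : t ≠ 0) :
    α / t + lam * t = 2 * (lam * t₀) + lam * (t - t₀) ^ 2 / t := by
  subst h; field_simp; ring

lemma saddlePoint_pos (hα : 0 < α) (hlam : 0 < lam) : 0 < saddlePoint α lam :=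
  sqrt_pos.2 (div_pos hα hlam)

lemma saddleWidth_pos (hα : 0 < α) (hlam : 0 < lam) : 0 < saddleWidth α lam :=
  sqrt_pos.2 (div_pos (saddlePoint_pos hα hlam) hlam)

lemma saddleWidth_nonneg : 0 ≤ saddleWidth α lam := sqrt_nonneg _

lemma mul_saddlePoint_sq (hα : 0 ≤ α) (hlam : 0 < lam) : lam * saddlePoint α lam ^ 2 = α := by
  rw [saddlePoint, sq_sqrt (div_nonneg hα hlam.le)]; field_simp

lemma mul_saddlePoint (hlam : 0 < lam) : lam * saddlePoint α lam = √(α * lam) := by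
  rw [show α * lam = lam ^ 2 * (α / lam) by field_simp, sqrt_mul (sq_nonneg _), sqrt_sq hlam.le,
    saddlePoint]

lemma mul_saddleWidth_sq (hlam : 0 < lam) : lam * saddleWidth α lam ^ 2 = saddlePoint α lam := by
  have : 0 ≤ saddlePoint α lam := sqrt_nonneg _
  rw [saddleWidth, sq_sqrt (div_nonneg this hlam.le)]; field_simp

lemma saddleWidth_sq_mul (hα : 0 ≤ α) (hlam : 0 < lam) :
    saddleWidth α lam ^ 2 * (lam * √lam) = √α := by
  rw [← mul_assoc, mul_comm _ lam, mul_saddleWidth_sq hlam, saddlePoint, sqrt_div hα,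
    div_mul_cancel₀ _ (sqrt_pos.2 hlam).ne']

lemma exp_neg_div_add_mul (hα : 0 ≤ α) (hlam : 0 < lam) (ht : t ≠ 0) :
    exp (-(α / t + lam * t)) =
      exp (-2 * √(α * lam)) * exp (-(lam * (t - saddlePoint α lam) ^ 2 / t)) := by
  rw [div_add_mul_eq_of_mul_sq_eq (mul_saddlePoint_sq hα hlam) ht, mul_saddlePoint hlam,
    ← exp_add]
  ring_nf

lemma exp_neg_mul_sq_sub_div_le {t₀ : ℝ} (hlam : 0 ≤ lam) (ht : 0 < t) :
    exp (-(lam * (t - t₀) ^ 2 / t)) ≤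
      exp (-(lam / (2 * t₀)) * (t - t₀) ^ 2) + exp (-(lam / 4) * t) := by
  rcases le_or_gt t (2 * t₀) with hnear | hfar
  · refine le_add_of_le_of_nonneg (exp_le_exp.2 ?_) (exp_pos _).le
    rw [neg_mul, neg_le_neg_iff, div_mul_eq_mul_div]
    exact div_le_div_of_nonneg_left (by positivity) ht hnear
  · refine le_add_of_nonneg_of_le (exp_pos _).le (exp_le_exp.2 ?_)
    have : t ^ 2 / 4 ≤ (t - t₀) ^ 2 := by nlinarith
    rw [neg_mul, neg_le_neg_iff, le_div_iff₀ ht]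
    nlinarith

theorem kernelIntegral_le (hα : 0 < α) (hT : 0 ≤ T) (hlam : 0 < lam) :
    kernelIntegral α T lam ≤
      exp (-2 * √(α * lam)) * (√(2 * π) * saddleWidth α lam + 4 / lam) := by
  set t₀ := saddlePoint α lam
  have ht₀ : 0 < t₀ := saddlePoint_pos hα hlam
  set b := lam / (2 * t₀)
  have hb : 0 < b := by positivity
  set E := exp (-2 * √(α * lam))
  have hgauss : Integrable fun t => exp (-b * (t - t₀) ^ 2) :=
    (integrable_exp_neg_mul_sq hb).comp_sub_right t₀
  have htail : IntegrableOn (fun t => exp (-(lam / 4) * t)) (Ioi 0) :=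
    integrableOn_exp_mul_Ioi (by linarith) 0
  have hpt : ∀ t ∈ Ioc 0 T, kernelIntegrand α T lam t ≤
      E * (exp (-b * (t - t₀) ^ 2) + exp (-(lam / 4) * t)) := fun t ht =>
    (kernelIntegrand_le_exp_neg hα.le ht.2).trans <|
      (exp_neg_div_add_mul hα.le hlam ht.1.ne').trans_le <|
        mul_le_mul_of_nonneg_left (exp_neg_mul_sq_sub_div_le hlam.le ht.1) (exp_pos _).le
  have hwidth : √(π / b) = √(2 * π) * saddleWidth α lam := by
    rw [saddleWidth, ← sqrt_mul (by positivity)]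
    congr 1; simp only [b, t₀]; field_simp
  calc kernelIntegral α T lam = ∫ t in Ioc 0 T, kernelIntegrand α T lam t :=
        intervalIntegral.integral_of_le hT
    _ ≤ ∫ t in Ioc 0 T, E * (exp (-b * (t - t₀) ^ 2) + exp (-(lam / 4) * t)) :=
        setIntegral_mono_on (intervalIntegrable_kernelIntegrand hα.le hT hlam.le).1
          ((hgauss.integrableOn.add (htail.mono_set Ioc_subset_Ioi_self)).const_mul E)
          measurableSet_Ioc hpt
    _ = E * ((∫ t in Ioc 0 T, exp (-b * (t - t₀) ^ 2)) +
          ∫ t in Ioc 0 T, exp (-(lam / 4) * t)) := by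
        rw [integral_const_mul, integral_add hgauss.integrableOn
          (htail.mono_set Ioc_subset_Ioi_self)]
    _ ≤ E * ((∫ t, exp (-b * (t - t₀) ^ 2)) + ∫ t in Ioi 0, exp (-(lam / 4) * t)) := by
        refine mul_le_mul_of_nonneg_left (add_le_add ?_ ?_) (exp_pos _).le
        · exact setIntegral_le_integral hgauss (ae_of_all _ fun _ => (exp_pos _).le)
        · exact setIntegral_mono_set htail (ae_of_all _ fun _ => (exp_pos _).le)
            Ioc_subset_Ioi_self.eventuallyLE
    _ = E * (√(2 * π) * saddleWidth α lam + 4 / lam) := by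
        rw [integral_sub_right_eq_self (fun t => exp (-b * t ^ 2)), integral_gaussian,
          integral_exp_mul_Ioi (by linarith), hwidth]
        congr 2; field_simp; simp

lemma exp_le_kernelIntegrand (hα : 0 < α) (hT : 0 < T) (hlam : 0 < lam)
    (ht : t ∈ Icc (saddlePoint α lam) (saddlePoint α lam + saddleWidth α lam))
    (hδ : saddlePoint α lam + saddleWidth α lam ≤ T / 2) :
    exp (-2 * √(α * lam) - 1 - 2 * α / T) ≤ kernelIntegrand α T lam t := by
  set t₀ := saddlePoint α lam
  set δ := saddleWidth α lam
  have ht₀ : 0 < t₀ := saddlePoint_pos hα hlam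
  have ht0 : 0 < t := ht₀.trans_le ht.1
  have hTt : T / 2 ≤ T - t := by linarith [ht.2]
  have hquad : lam * (t - t₀) ^ 2 / t ≤ 1 := by
    rw [div_le_one ht0]
    calc lam * (t - t₀) ^ 2 ≤ lam * δ ^ 2 :=
          mul_le_mul_of_nonneg_left (pow_le_pow_left₀ (sub_nonneg.2 ht.1) (by linarith [ht.2]) 2)
            hlam.le
      _ = t₀ := mul_saddleWidth_sq hlam
      _ ≤ t := ht.1
  have hfar : α / (T - t) ≤ 2 * α / T := by
    rw [div_le_div_iff₀ (by linarith) hT]; nlinarith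
  have hsplit : kernelIntegrand α T lam t = exp (-(α / t + lam * t)) * exp (-(α / (T - t))) := by
    rw [kernelIntegrand, ← exp_add, ← exp_add]; ring_nf
  rw [hsplit, exp_neg_div_add_mul hα.le hlam ht0.ne', ← exp_add, ← exp_add, exp_le_exp]
  linarith

theorem le_kernelIntegral (hα : 0 < α) (hT : 0 < T) (hlam : 0 < lam)
    (hδ : saddlePoint α lam + saddleWidth α lam ≤ T / 2) :
    exp (-2 * √(α * lam) - 1 - 2 * α / T) * saddleWidth α lam ≤ kernelIntegral α T lam := by
  have ht₀ := saddlePoint_pos hα hlam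
  have hδ₀ := saddleWidth_pos hα hlam
  calc exp (-2 * √(α * lam) - 1 - 2 * α / T) * saddleWidth α lam
      = ∫ _ in saddlePoint α lam..saddlePoint α lam + saddleWidth α lam,
          exp (-2 * √(α * lam) - 1 - 2 * α / T) := by simp; ring
    _ ≤ ∫ t in saddlePoint α lam..saddlePoint α lam + saddleWidth α lam,
          kernelIntegrand α T lam t :=
        intervalIntegral.integral_mono_on (by linarith) intervalIntegrable_const
          ((intervalIntegrable_kernelIntegrand hα.le hT.le hlam.le).mono_set
            (by rw [uIcc_of_le hT.le, uIcc_of_le (by linarith)]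
                exact Icc_subset_Icc (by linarith) (by linarith)))
          fun t ht => exp_le_kernelIntegrand hα hT hlam ht hδ
    _ ≤ kernelIntegral α T lam :=
        intervalIntegral.integral_mono_interval ht₀.le (by linarith) (by linarith)
          (ae_of_all _ fun _ => kernelIntegrand_nonneg)
          (intervalIntegrable_kernelIntegrand hα.le hT.le hlam.le)

lemma rpow_three_fourths_sq {x : ℝ} (hx : 0 ≤ x) : (x ^ (3 / 4 : ℝ)) ^ 2 = x * √x := by
  rw [← rpow_natCast, ← rpow_mul hx, sqrt_eq_rpow, ← rpow_one_add' hx (by norm_num)]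
  norm_num

lemma sqrt_sqrt_le_saddleWidth_mul (hα : 0 ≤ α) (hlam : 0 < lam) :
    √√α ≤ saddleWidth α lam * (1 + lam) ^ (3 / 4 : ℝ) := by
  rw [← pow_le_pow_iff_left₀ (by positivity) (mul_nonneg saddleWidth_nonneg (by positivity))
    two_ne_zero, sq_sqrt (sqrt_nonneg _), mul_pow, rpow_three_fourths_sq (by linarith),
    ← saddleWidth_sq_mul hα hlam]
  gcongr <;> linarith

lemma saddleWidth_mul_le (hα : 0 ≤ α) (hlam : 1 ≤ lam) :
    saddleWidth α lam * (1 + lam) ^ (3 / 4 : ℝ) ≤ 2 * √√α := by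
  have hlam₀ : 0 < lam := by linarith
  have hsqrt : √(1 + lam) ≤ 2 * √lam :=
    (sqrt_le_left (by positivity)).2 (by rw [mul_pow, sq_sqrt hlam₀.le]; linarith)
  have hcube : (1 + lam) * √(1 + lam) ≤ 2 ^ 2 * (lam * √lam) := by
    nlinarith [sqrt_nonneg (1 + lam), sqrt_nonneg lam]
  rw [← pow_le_pow_iff_left₀ (mul_nonneg saddleWidth_nonneg (by positivity)) (by positivity)
    two_ne_zero, mul_pow, mul_pow, sq_sqrt (sqrt_nonneg _), rpow_three_fourths_sq (by linarith),
    ← saddleWidth_sq_mul hα hlam₀]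
  nlinarith [sq_nonneg (saddleWidth α lam)]

theorem exists_eventually_le_kernelIntegral (hα : 0 < α) (hT : 0 < T) :
    ∃ c > 0, ∀ᶠ lam in atTop, c * decayProfile α lam ≤ kernelIntegral α T lam := by
  have hpoint : Tendsto (saddlePoint α) atTop (𝓝 0) := by
    have := ((tendsto_const_nhds (x := α)).div_atTop tendsto_id).sqrt
    rwa [sqrt_zero] at this
  have hwidth : Tendsto (saddleWidth α) atTop (𝓝 0) := by
    have := (hpoint.div_atTop tendsto_id).sqrt
    rwa [sqrt_zero] at this
  have hsum : Tendsto (fun lam => saddlePoint α lam + saddleWidth α lam) atTop (𝓝 0) := by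
    simpa using hpoint.add hwidth
  refine ⟨exp (-1 - 2 * α / T) * √√α, by positivity, ?_⟩
  filter_upwards [hsum.eventually (gt_mem_nhds (half_pos hT)), eventually_gt_atTop 0]
    with lam hδ hlam
  calc exp (-1 - 2 * α / T) * √√α * decayProfile α lam
      ≤ exp (-1 - 2 * α / T) * (saddleWidth α lam * (1 + lam) ^ (3 / 4 : ℝ)) *
          decayProfile α lam := by
        gcongr
        · exact (decayProfile_pos lam hlam.le).le
        · exact sqrt_sqrt_le_saddleWidth_mul hα.le hlam
    _ = exp (-2 * √(α * lam) - 1 - 2 * α / T) * saddleWidth α lam := by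
        rw [decayProfile, sub_sub, sub_eq_add_neg _ (1 + 2 * α / T), exp_add]
        field_simp
        ring_nf
    _ ≤ kernelIntegral α T lam := le_kernelIntegral hα hT hlam hδ.le

theorem exists_eventually_kernelIntegral_le (hα : 0 < α) (hT : 0 ≤ T) :
    ∃ K, ∀ᶠ lam in atTop, kernelIntegral α T lam ≤ K * decayProfile α lam := by
  refine ⟨2 * √(2 * π) * √√α + 8, ?_⟩
  filter_upwards [eventually_ge_atTop 1] with lam hlam
  have hlam₀ : 0 < lam := by linarith
  set P := (1 + lam) ^ (3 / 4 : ℝ) with hP_def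
  have hP : 0 < P := by positivity
  have hPle : P ≤ 2 * lam :=
    (rpow_le_self_of_one_le (by linarith) (by norm_num)).trans (by linarith)
  have hwidth : saddleWidth α lam ≤ 2 * √√α / P := by
    rw [le_div_iff₀ hP]; exact saddleWidth_mul_le hα.le hlam
  have htail : 4 / lam ≤ 8 / P := by
    rw [div_le_div_iff₀ hlam₀ hP]; linarith
  calc kernelIntegral α T lam
      ≤ exp (-2 * √(α * lam)) * (√(2 * π) * saddleWidth α lam + 4 / lam) :=
        kernelIntegral_le hα hT hlam₀
    _ ≤ exp (-2 * √(α * lam)) * (√(2 * π) * (2 * √√α / P) + 8 / P) := by gcongr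
    _ = (2 * √(2 * π) * √√α + 8) * decayProfile α lam := by
        rw [decayProfile, ← hP_def]; field_simp

end

/-- Two-sided comparison for the Laplace-type integral
`I(T,λ) = ∫₀^T e^{-α(1/t + 1/(T-t))} e^{-λt} dt`:
there is `C > 1` with
`C⁻¹ e^{-2√(αλ)}/(1+λ)^{3/4} ≤ I(T,λ) ≤ C e^{-2√(αλ)}/(1+λ)^{3/4}` for all `λ ≥ 0`. -/
theorem statement6 (α T : ℝ) (hα : 0 < α) (hT : 0 < T) :
    ∃ C : ℝ, 1 < C ∧ ∀ lam ≥ (0 : ℝ),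
      C⁻¹ * (Real.exp (-2 * Real.sqrt (α * lam)) / (1 + lam) ^ ((3:ℝ)/4))
          ≤ (∫ t in (0:ℝ)..T, Real.exp (-α * (1 / t + 1 / (T - t))) * Real.exp (-lam * t)) ∧
      (∫ t in (0:ℝ)..T, Real.exp (-α * (1 / t + 1 / (T - t))) * Real.exp (-lam * t))
          ≤ C * (Real.exp (-2 * Real.sqrt (α * lam)) / (1 + lam) ^ ((3:ℝ)/4)) := by
  obtain ⟨c, hc, hlow⟩ := exists_eventually_le_kernelIntegral hα hT
  obtain ⟨K, hup⟩ := exists_eventually_kernelIntegral_le hα hT.le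
  exact exists_two_sided_bound_of_antitoneOn (antitoneOn_kernelIntegral hα.le hT.le)
    (antitoneOn_decayProfile hα.le) decayProfile_pos hc hlow hup
end

section
/- Let 0 < T < c₀ and Φ : (0,∞) → (0,∞). Suppose λ ≥ 2 is such that, with ε_λ := (1/2) e^{−2λT}, the inequality e^{−2λT} ≤ Φ(ε_λ) · e^{−2c₀ λ} / λ + ε_λ holds. Then Φ(ε_λ) ≥ (2 ε_λ)^{−(c₀/T − 1)}. -/
/-! With `E = e^{-2λT}` the claimed bound `(2ε_λ)^{-(c₀/T-1)}` is just `E e^{2c₀λ}`, while the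
hypothesis says `λ E / 2 ≤ Φ(ε_λ) e^{-2c₀λ}`; `λ ≥ 2` closes the gap. -/

theorem Real.exp_mul_rpow_neg_div_sub_one {T : ℝ} (hT : T ≠ 0) (x c : ℝ) :
    Real.exp (x * T) ^ (-(c / T - 1)) = Real.exp (x * T) / Real.exp (x * c) := by
  rw [← Real.exp_mul, ← Real.exp_sub]
  congr 1
  field_simp
  ring

theorem div_le_of_le_mul_div_add_half {E P δ lam : ℝ} (hE : 0 ≤ E) (hδ : 0 < δ)
    (hlam : 2 ≤ lam) (h : E ≤ P * δ / lam + E / 2) : E / δ ≤ P := by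
  have hlam0 : 0 < lam := by linarith
  have half_le : E / 2 * lam ≤ P * δ := by
    rw [← le_div_iff₀ hlam0]
    linarith
  rw [div_le_iff₀ hδ]
  nlinarith

theorem statement13_general (T c₀ : ℝ) (Φ : ℝ → ℝ) (hT : 0 < T)
    (lam : ℝ) (hlam : 2 ≤ lam)
    (h : Real.exp (-2 * lam * T) ≤
      Φ ((1/2) * Real.exp (-2 * lam * T)) * Real.exp (-2 * c₀ * lam) / lam
        + (1/2) * Real.exp (-2 * lam * T)) :
    Φ ((1/2) * Real.exp (-2 * lam * T)) ≥
      (2 * ((1/2) * Real.exp (-2 * lam * T))) ^ (-(c₀ / T - 1)) := by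
  rw [ge_iff_le, ← mul_assoc, mul_one_div_cancel two_ne_zero, one_mul,
    Real.exp_mul_rpow_neg_div_sub_one hT.ne']
  rw [mul_right_comm (-2) c₀ lam] at h
  refine div_le_of_le_mul_div_add_half (Real.exp_pos _).le (Real.exp_pos _) hlam ?_
  linarith

/-- Optimality argument in the case `k = 2`: if `0 < T < c₀`,
`Φ : (0,∞) → (0,∞)` and, with `ε_λ = (1/2)e^{-2λT}` for some `λ ≥ 2`, one has
`e^{-2λT} ≤ Φ(ε_λ) e^{-2c₀λ}/λ + ε_λ`, then `Φ(ε_λ) ≥ (2ε_λ)^{-(c₀/T - 1)}`. -/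
theorem statement13 (T c₀ : ℝ) (Φ : ℝ → ℝ) (hT : 0 < T) (hTc : T < c₀)
    (hΦ : ∀ x > (0 : ℝ), 0 < Φ x)
    (lam : ℝ) (hlam : 2 ≤ lam)
    (h : Real.exp (-2 * lam * T) ≤
      Φ ((1/2) * Real.exp (-2 * lam * T)) * Real.exp (-2 * c₀ * lam) / lam
        + (1/2) * Real.exp (-2 * lam * T)) :
    Φ ((1/2) * Real.exp (-2 * lam * T)) ≥
      (2 * ((1/2) * Real.exp (-2 * lam * T))) ^ (-(c₀ / T - 1)) :=
  statement13_general T c₀ Φ hT lam hlam h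
end
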